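/- arXiv:1212.5638 — 3 statements merged into one kernel-verified Lean document; each statement's English description precedes it below -/
import Mathlib

section
/- Let Λ^{(n)}(x) = ∏_{i=1}^n Λ_{L_i}(x_i) and Λ^{(n)}(y) = ∏_{i=1}^n Λ_{ℓ_i}(y_i) be n-particle rectangles with all side lengths L_i, ℓ_i ≤ L. If the Hausdorff distance d_H(x,y) between S_x and S_y exceeds L, then the rectangles are partially separated, i.e., either some Λ_{L_i}(x_i) is disjoint from ⋃_j Λ_{ℓ_j}(y_j), or some Λ_{ℓ_j}(y_j) is disjoint from ⋃_i Λ_{L_i}(x_i). -/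
open Finset

/-- The one-particle box `Λ_L(a) = {z ∈ ℤ^d : ‖z − a‖∞ ≤ L/2}` (sup-norm). -/
def oneBox {d : ℕ} (a : Fin d → ℝ) (L : ℝ) : Set (Fin d → ℤ) :=
  {z : Fin d → ℤ | dist (fun i => (z i : ℝ)) a ≤ L / 2}

/-- If the Hausdorff distance between the component sets `S_x` and `S_y` of the centers
of two `n`-particle rectangles `∏ᵢ Λ_{Lᵢ}(xᵢ)` and `∏ᵢ Λ_{ℓᵢ}(yᵢ)`, with all side
lengths `≤ L`, exceeds `L`, then the rectangles are partially separated: some factor box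
of one rectangle is disjoint from the union of all factor boxes of the other. -/
theorem stmt_3 {n d : ℕ} (hn : (Finset.univ : Finset (Fin n)).Nonempty)
    (x y : Fin n → (Fin d → ℝ)) (Lside ℓside : Fin n → ℝ) (L : ℝ)
    (hL : ∀ i, Lside i ≤ L) (hℓ : ∀ i, ℓside i ≤ L)
    (hdH : L <
      max (univ.sup' hn fun i => univ.inf' hn fun j => dist (x i) (y j))
          (univ.sup' hn fun j => univ.inf' hn fun i => dist (x i) (y j))) :
    (∃ i, oneBox (x i) (Lside i) ∩ (⋃ j, oneBox (y j) (ℓside j)) = ∅) ∨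
    (∃ j, oneBox (y j) (ℓside j) ∩ (⋃ i, oneBox (x i) (Lside i)) = ∅) := by
  have key : ∀ (a b : Fin d → ℝ) (La Lb : ℝ), La ≤ L → Lb ≤ L → L < dist a b →
      oneBox a La ∩ oneBox b Lb = ∅ := by
    intro a b La Lb hLa hLb hd
    apply Set.eq_empty_iff_forall_notMem.2
    rintro z ⟨hza, hzb⟩
    have : dist a b ≤ La / 2 + Lb / 2 := by
      calc dist a b ≤ dist a (fun i => (z i : ℝ)) + dist (fun i => (z i : ℝ)) b :=
            dist_triangle _ _ _
        _ ≤ La / 2 + Lb / 2 := add_le_add (by rw [dist_comm]; exact hza) hzb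
    linarith
  rcases lt_max_iff.1 hdH with h | h
  · left
    obtain ⟨i, -, hi⟩ := (Finset.lt_sup'_iff hn).1 h
    refine ⟨i, ?_⟩
    rw [Set.inter_iUnion]
    apply Set.iUnion_eq_empty.2
    intro j
    exact key _ _ _ _ (hL i) (hℓ j) ((Finset.lt_inf'_iff hn).1 hi j (Finset.mem_univ j))
  · right
    obtain ⟨j, -, hj⟩ := (Finset.lt_sup'_iff hn).1 h
    refine ⟨j, ?_⟩
    rw [Set.inter_iUnion]
    apply Set.iUnion_eq_empty.2
    intro i
    rw [Set.inter_comm]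
    exact key _ _ _ _ (hL i) (hℓ j) ((Finset.lt_inf'_iff hn).1 hj i (Finset.mem_univ i))
end

section
/- Let H₁, H₂ be self-adjoint operators on finite-dimensional Hilbert spaces ℋ₁, ℋ₂, let H = H₁ ⊗ I + I ⊗ H₂, and suppose E ∉ σ(H). Then for all unit vectors of the form δ_a = φ_a ⊗ ψ_a and δ_b = φ_b ⊗ ψ_b where {φ} and {ψ} are orthonormal bases, |⟨δ_a, (H − E)⁻¹ δ_b⟩| ≤ Σ_{λ ∈ σ(H₁)} |⟨ψ_a, (H₂ − (E − λ))⁻¹ ψ_b⟩|, where each E − λ ∉ σ(H₂). -/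
/-!
Diagonalize `H₁ = U₁ D₁ U₁*` and `H₂ = U₂ D₂ U₂*`. Then `U₁ ⊗ U₂` diagonalizes `H` with
eigenvalues `λᵢ + μⱼ`, which gives `σ(H₁) + σ(H₂) ⊆ σ(H)` and expresses the resolvent entry as
`∑ᵢ U₁ a₁ i · conj (U₁ b₁ i) · (H₂ - (E - λᵢ))⁻¹ a₂ b₂`. Grouping the indices `i` by the value
of `λᵢ`, the coefficient of each eigenvalue is an entry of a spectral projection of `H₁`, of
modulus at most `1` because the rows of `U₁` are unit vectors.
-/

open scoped Kronecker

namespace Matrix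

variable {n m : Type*} [Fintype n] [DecidableEq n] [Fintype m] [DecidableEq m]

section Conjugation

variable {R : Type*} [CommRing R] [StarRing R]

/-- No invertibility is needed: the inverse of a singular matrix is `0` on both sides. -/
theorem inv_unitary_conj {U : Matrix n n R} (hU : U ∈ unitaryGroup n R) (M : Matrix n n R) :
    (U * M * star U)⁻¹ = U * M⁻¹ * star U := by
  rw [mul_inv_rev, mul_inv_rev, inv_eq_left_inv (Unitary.star_mul_self_of_mem hU),
    inv_eq_left_inv (Unitary.mul_star_self_of_mem hU), Matrix.mul_assoc]

theorem unitary_conj_sub_smul_one {U : Matrix n n R} (hU : U ∈ unitaryGroup n R)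
    (M : Matrix n n R) (c : R) :
    U * M * star U - c • (1 : Matrix n n R) = U * (M - c • 1) * star U := by
  rw [Matrix.mul_sub, Matrix.sub_mul, Matrix.mul_smul, Matrix.smul_mul, Matrix.mul_one,
    Unitary.mul_star_self_of_mem hU]

theorem unitary_conj_diagonal_apply (U : Matrix n n R) (d : n → R) (a b : n) :
    (U * diagonal d * star U) a b = ∑ k, U a k * d k * star (U b k) := by
  rw [mul_apply]
  simp only [mul_diagonal, star_apply]

theorem kroneckerSum_unitary_conj_diagonal {U₁ : Matrix n n R} {U₂ : Matrix m m R}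
    (hU₁ : U₁ ∈ unitaryGroup n R) (hU₂ : U₂ ∈ unitaryGroup m R) (d₁ : n → R) (d₂ : m → R) :
    (U₁ * diagonal d₁ * star U₁) ⊗ₖ (1 : Matrix m m R) +
        (1 : Matrix n n R) ⊗ₖ (U₂ * diagonal d₂ * star U₂) =
      (U₁ ⊗ₖ U₂) * diagonal (fun p => d₁ p.1 + d₂ p.2) * star (U₁ ⊗ₖ U₂) := by
  have hdiag : diagonal (fun p : n × m => d₁ p.1 + d₂ p.2) =
      diagonal d₁ ⊗ₖ (1 : Matrix m m R) + (1 : Matrix n n R) ⊗ₖ diagonal d₂ := by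
    ext ⟨i₁, i₂⟩ ⟨j₁, j₂⟩
    by_cases h₁ : i₁ = j₁ <;> by_cases h₂ : i₂ = j₂ <;> simp [h₁, h₂]
  have h₁ : U₁ * U₁ᴴ = 1 := Unitary.mul_star_self_of_mem hU₁
  have h₂ : U₂ * U₂ᴴ = 1 := Unitary.mul_star_self_of_mem hU₂
  simp only [star_eq_conjTranspose]
  rw [hdiag, conjTranspose_kronecker, Matrix.mul_add, Matrix.add_mul]
  simp only [← mul_kronecker_mul, Matrix.mul_one, h₁, h₂]

end Conjugation

section Field

variable {K : Type*} [Field K] [StarRing K]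

theorem spectrum_unitary_conj_diagonal {U : Matrix n n K} (hU : U ∈ unitaryGroup n K)
    (d : n → K) : spectrum K (U * diagonal d * star U) = Set.range d := by
  rw [Unitary.spectrum_star_right_conjugate (U := ⟨U, hU⟩), spectrum_diagonal]

theorem inv_unitary_conj_diagonal_sub_smul_one {U : Matrix n n K} (hU : U ∈ unitaryGroup n K)
    {d : n → K} {c : K} (hc : ∀ k, d k ≠ c) :
    (U * diagonal d * star U - c • (1 : Matrix n n K))⁻¹ =
      U * diagonal (fun k => (d k - c)⁻¹) * star U := by
  rw [unitary_conj_sub_smul_one hU, inv_unitary_conj hU]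
  congr 2
  refine inv_eq_right_inv ?_
  rw [smul_one_eq_diagonal, diagonal_sub, diagonal_mul_diagonal, ← diagonal_one]
  exact congr_arg diagonal (funext fun k => mul_inv_cancel₀ (sub_ne_zero.mpr (hc k)))

end Field

section RCLike

variable {𝕜 : Type*} [RCLike 𝕜]

theorem sum_norm_sq_of_mem_unitaryGroup {U : Matrix n n 𝕜} (hU : U ∈ unitaryGroup n 𝕜) (a : n) :
    ∑ i, ‖U a i‖ ^ 2 = 1 := by
  have h : (U * star U) a a = 1 := by rw [Unitary.mul_star_self_of_mem hU, one_apply_eq]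
  simp only [mul_apply, star_apply, RCLike.star_def, RCLike.mul_conj] at h
  exact_mod_cast h

theorem norm_sum_mul_star_le_one {U : Matrix n n 𝕜} (hU : U ∈ unitaryGroup n 𝕜) (a b : n)
    (s : Finset n) : ‖∑ i ∈ s, U a i * star (U b i)‖ ≤ 1 :=
  calc ‖∑ i ∈ s, U a i * star (U b i)‖
      ≤ ∑ i ∈ s, ‖U a i‖ * ‖U b i‖ := by
        refine (norm_sum_le _ _).trans_eq (Finset.sum_congr rfl fun i _ => ?_)
        rw [norm_mul, norm_star]
    _ ≤ ∑ i ∈ s, (‖U a i‖ ^ 2 + ‖U b i‖ ^ 2) / 2 :=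
        Finset.sum_le_sum fun i _ => by nlinarith [sq_nonneg (‖U a i‖ - ‖U b i‖)]
    _ ≤ ∑ i, (‖U a i‖ ^ 2 + ‖U b i‖ ^ 2) / 2 :=
        Finset.sum_le_sum_of_subset_of_nonneg s.subset_univ fun i _ _ => by positivity
    _ = 1 := by
        rw [← Finset.sum_div, Finset.sum_add_distrib, sum_norm_sq_of_mem_unitaryGroup hU,
          sum_norm_sq_of_mem_unitaryGroup hU]
        norm_num

end RCLike

section IsHermitian

variable {𝕜 : Type*} [RCLike 𝕜] {A : Matrix n n 𝕜} {B : Matrix m m 𝕜}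

theorem IsHermitian.eq_unitary_conj_diagonal (hA : A.IsHermitian) :
    A = (hA.eigenvectorUnitary : Matrix n n 𝕜) * diagonal (fun i => (hA.eigenvalues i : 𝕜)) *
      star (hA.eigenvectorUnitary : Matrix n n 𝕜) :=
  hA.spectral_theorem

theorem IsHermitian.inv_sub_smul_one_apply (hA : A.IsHermitian) {c : 𝕜}
    (hc : c ∉ spectrum 𝕜 A) (a b : n) :
    (A - c • (1 : Matrix n n 𝕜))⁻¹ a b =
      ∑ k, (hA.eigenvectorUnitary : Matrix n n 𝕜) a k * ((hA.eigenvalues k : 𝕜) - c)⁻¹ *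
        star ((hA.eigenvectorUnitary : Matrix n n 𝕜) b k) := by
  have hU := hA.eigenvectorUnitary.2
  rw [hA.eq_unitary_conj_diagonal, spectrum_unitary_conj_diagonal hU] at hc
  conv_lhs => rw [hA.eq_unitary_conj_diagonal]
  rw [inv_unitary_conj_diagonal_sub_smul_one hU fun k hk => hc ⟨k, hk⟩,
    unitary_conj_diagonal_apply]

theorem IsHermitian.kroneckerSum_eq_unitary_conj_diagonal (hA : A.IsHermitian)
    (hB : B.IsHermitian) :
    A ⊗ₖ (1 : Matrix m m 𝕜) + (1 : Matrix n n 𝕜) ⊗ₖ B =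
      ((hA.eigenvectorUnitary : Matrix n n 𝕜) ⊗ₖ (hB.eigenvectorUnitary : Matrix m m 𝕜)) *
        diagonal (fun p => (hA.eigenvalues p.1 : 𝕜) + hB.eigenvalues p.2) *
        star ((hA.eigenvectorUnitary : Matrix n n 𝕜) ⊗ₖ (hB.eigenvectorUnitary : Matrix m m 𝕜)) := by
  conv_lhs => rw [hA.eq_unitary_conj_diagonal, hB.eq_unitary_conj_diagonal]
  exact kroneckerSum_unitary_conj_diagonal hA.eigenvectorUnitary.2 hB.eigenvectorUnitary.2 _ _

theorem IsHermitian.add_mem_spectrum_kroneckerSum (hA : A.IsHermitian) (hB : B.IsHermitian)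
    {x y : 𝕜} (hx : x ∈ spectrum 𝕜 A) (hy : y ∈ spectrum 𝕜 B) :
    x + y ∈ spectrum 𝕜 (A ⊗ₖ (1 : Matrix m m 𝕜) + (1 : Matrix n n 𝕜) ⊗ₖ B) := by
  rw [hA.kroneckerSum_eq_unitary_conj_diagonal hB, spectrum_unitary_conj_diagonal
    (kronecker_mem_unitary hA.eigenvectorUnitary.2 hB.eigenvectorUnitary.2)]
  rw [hA.eq_unitary_conj_diagonal, spectrum_unitary_conj_diagonal hA.eigenvectorUnitary.2] at hx
  rw [hB.eq_unitary_conj_diagonal, spectrum_unitary_conj_diagonal hB.eigenvectorUnitary.2] at hy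
  obtain ⟨i, rfl⟩ := hx
  obtain ⟨j, rfl⟩ := hy
  exact ⟨(i, j), rfl⟩

theorem IsHermitian.inv_kroneckerSum_sub_smul_one_apply (hA : A.IsHermitian)
    (hB : B.IsHermitian) {c : 𝕜}
    (hc : c ∉ spectrum 𝕜 (A ⊗ₖ (1 : Matrix m m 𝕜) + (1 : Matrix n n 𝕜) ⊗ₖ B))
    (a₁ b₁ : n) (a₂ b₂ : m) :
    (A ⊗ₖ (1 : Matrix m m 𝕜) + (1 : Matrix n n 𝕜) ⊗ₖ B - c • (1 : Matrix (n × m) (n × m) 𝕜))⁻¹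
        (a₁, a₂) (b₁, b₂) =
      ∑ i, (hA.eigenvectorUnitary : Matrix n n 𝕜) a₁ i *
        star ((hA.eigenvectorUnitary : Matrix n n 𝕜) b₁ i) *
        (B - (c - hA.eigenvalues i) • (1 : Matrix m m 𝕜))⁻¹ a₂ b₂ := by
  have hcB : ∀ i, c - hA.eigenvalues i ∉ spectrum 𝕜 B := fun i h => hc <| by
    have hi : (hA.eigenvalues i : 𝕜) ∈ spectrum 𝕜 A :=
      hA.spectrum_eq_image_range ▸ ⟨_, ⟨i, rfl⟩, rfl⟩
    simpa using hA.add_mem_spectrum_kroneckerSum hB hi h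
  have hW := kronecker_mem_unitary hA.eigenvectorUnitary.2 hB.eigenvectorUnitary.2
  rw [hA.kroneckerSum_eq_unitary_conj_diagonal hB, spectrum_unitary_conj_diagonal hW] at hc
  rw [hA.kroneckerSum_eq_unitary_conj_diagonal hB,
    inv_unitary_conj_diagonal_sub_smul_one hW fun p hp => hc ⟨p, hp⟩,
    unitary_conj_diagonal_apply, Fintype.sum_prod_type]
  simp_rw [hB.inv_sub_smul_one_apply (hcB _), Finset.mul_sum]
  refine Finset.sum_congr rfl fun i _ => Finset.sum_congr rfl fun j _ => ?_
  rw [kroneckerMap_apply, kroneckerMap_apply, star_mul',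
    show (hA.eigenvalues i : 𝕜) + hB.eigenvalues j - c = hB.eigenvalues j - (c - hA.eigenvalues i)
      by ring]
  ring

end IsHermitian

end Matrix

/-- Let `H₁`, `H₂` be Hermitian matrices (self-adjoint operators on the
finite-dimensional Hilbert spaces `ℂ^A`, `ℂ^B` with their standard orthonormal bases),
let `H = H₁ ⊗ I + I ⊗ H₂`, and suppose `E ∉ σ(H)`. Then `E − λ ∉ σ(H₂)` for every
`λ ∈ σ(H₁)`, and the matrix elements of the resolvent satisfy
`|⟨δ_a, (H − E)⁻¹ δ_b⟩| ≤ Σ_{λ ∈ σ(H₁)} |⟨ψ_a, (H₂ − (E − λ))⁻¹ ψ_b⟩|`. -/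
theorem stmt_8 {A B : Type*} [Fintype A] [DecidableEq A] [Fintype B] [DecidableEq B]
    (H₁ : Matrix A A ℂ) (H₂ : Matrix B B ℂ)
    (hH₁ : H₁.IsHermitian) (hH₂ : H₂.IsHermitian)
    (hfin : (spectrum ℂ H₁).Finite) (E : ℝ)
    (hE : (E : ℂ) ∉ spectrum ℂ
      (H₁ ⊗ₖ (1 : Matrix B B ℂ) + (1 : Matrix A A ℂ) ⊗ₖ H₂)) :
    (∀ lam ∈ spectrum ℂ H₁, (E : ℂ) - lam ∉ spectrum ℂ H₂) ∧
    ∀ a₁ b₁ : A, ∀ a₂ b₂ : B,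
      ‖((H₁ ⊗ₖ (1 : Matrix B B ℂ) + (1 : Matrix A A ℂ) ⊗ₖ H₂ -
            (E : ℂ) • (1 : Matrix (A × B) (A × B) ℂ))⁻¹) (a₁, a₂) (b₁, b₂)‖ ≤
        ∑ lam ∈ hfin.toFinset,
          ‖((H₂ - ((E : ℂ) - lam) • (1 : Matrix B B ℂ))⁻¹) a₂ b₂‖ := by
  refine ⟨fun lam hlam hElam => hE ?_, fun a₁ b₁ a₂ b₂ => ?_⟩
  · simpa using hH₁.add_mem_spectrum_kroneckerSum hH₂ hlam hElam
  have hlam : ∀ i, (hH₁.eigenvalues i : ℂ) ∈ hfin.toFinset := fun i =>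
    hfin.mem_toFinset.2 (hH₁.spectrum_eq_image_range ▸ ⟨_, ⟨i, rfl⟩, rfl⟩)
  rw [hH₁.inv_kroneckerSum_sub_smul_one_apply hH₂ hE,
    ← Finset.sum_fiberwise_of_maps_to fun i _ => hlam i]
  refine (norm_sum_le _ _).trans (Finset.sum_le_sum fun z _ => ?_)
  set U : Matrix A A ℂ := (hH₁.eigenvectorUnitary : Matrix A A ℂ)
  set lam : A → ℝ := hH₁.eigenvalues
  have hfiber : ∑ i with (lam i : ℂ) = z,
        U a₁ i * star (U b₁ i) * (H₂ - ((E : ℂ) - lam i) • 1)⁻¹ a₂ b₂ =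
      (∑ i with (lam i : ℂ) = z, U a₁ i * star (U b₁ i)) * (H₂ - ((E : ℂ) - z) • 1)⁻¹ a₂ b₂ := by
    rw [Finset.sum_mul]
    exact Finset.sum_congr rfl fun i hi => by rw [(Finset.mem_filter.1 hi).2]
  refine (congrArg norm hfiber).trans_le ?_
  rw [norm_mul]
  exact mul_le_of_le_one_left (norm_nonneg _)
    (Matrix.norm_sum_mul_star_le_one hH₁.eigenvectorUnitary.2 a₁ b₁ _)
end

section
/- Let 0 < ℓ ≤ L/6 and α ∈ [3/5, 4/5] with (L−ℓ)/(2ℓα) ∈ ℕ. Then the boxes {Λ_ℓ^{(n)}(a)}_{a ∈ Ξ}, with Ξ = (x + αℓℤ^{nd}) ∩ {y ∈ ℝ^{nd} : ‖y−x‖∞ ≤ L/2}, cover Λ_L^{(n)}(x): every point of Λ_L^{(n)}(x) = {y ∈ ℤ^{nd} : ‖y−x‖∞ ≤ L/2} lies in Λ_ℓ^{(n)}(a) for some a ∈ Ξ. -/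
lemma scalar_key {ℓ α : ℝ} (hℓ : 0 < ℓ) (hα₁ : 3 / 5 ≤ α) (hα₂ : α ≤ 4 / 5)
    (k₀ : ℕ) (t : ℝ) (ht : |t| ≤ α * ℓ * k₀ + ℓ / 2) :
    ∃ m : ℤ, |α * ℓ * (m : ℝ)| ≤ α * ℓ * k₀ ∧ |t - α * ℓ * m| ≤ ℓ / 2 := by
  have hαℓ : 0 < α * ℓ := by nlinarith
  have hk0 : (0:ℝ) ≤ α * ℓ * k₀ := by positivity
  rw [abs_le] at ht
  set m₀ := round (t / (α * ℓ)) with hm₀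
  have hr := abs_sub_round (t / (α * ℓ))
  rw [abs_le] at hr
  have htu : t = α * ℓ * (t / (α * ℓ)) := by field_simp
  set u := t / (α * ℓ)
  by_cases hub : (k₀ : ℤ) < m₀
  · refine ⟨(k₀ : ℤ), ?_, ?_⟩
    · push_cast; rw [abs_of_nonneg hk0]
    · have hm : ((k₀:ℤ):ℝ) + 1 ≤ (m₀ : ℝ) := by exact_mod_cast hub
      push_cast at hm ⊢
      have : (k₀:ℝ) + 1/2 ≤ u := by linarith [hr.1]
      rw [abs_le]
      constructor <;> nlinarith
  · by_cases hlb : m₀ < -(k₀ : ℤ)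
    · refine ⟨-(k₀ : ℤ), ?_, ?_⟩
      · push_cast; rw [abs_of_nonpos (by linarith [hk0] : α * ℓ * (-(k₀:ℝ)) ≤ 0)]; ring_nf; linarith
      · have hm : (m₀ : ℝ) + 1 ≤ -(k₀:ℝ) := by exact_mod_cast hlb
        have : u ≤ -(k₀:ℝ) - 1/2 := by linarith [hr.2]
        push_cast
        rw [abs_le]
        constructor <;> nlinarith
    · refine ⟨m₀, ?_, ?_⟩
      · push_neg at hub hlb
        have h1 : (m₀:ℝ) ≤ k₀ := by exact_mod_cast hub
        have h2 : -(k₀:ℝ) ≤ m₀ := by exact_mod_cast hlb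
        rw [abs_le]; constructor <;> nlinarith
      · rw [abs_le]; constructor <;> nlinarith [hr.1, hr.2]

/-- Covering property of the suitable `ℓ`-covering: let `0 < ℓ ≤ L/6` and
`α ∈ [3/5, 4/5]` with `(L−ℓ)/(2ℓα) ∈ ℕ`. Every point of the `n`-particle box
`Λ_L^{(n)}(x) = {y ∈ ℤ^{nd} : ‖y−x‖∞ ≤ L/2}` lies in `Λ_ℓ^{(n)}(a)` for some center
`a ∈ Ξ = (x + αℓℤ^{nd}) ∩ {y ∈ ℝ^{nd} : ‖y−x‖∞ ≤ L/2}`. -/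
theorem stmt_13 {n d : ℕ} (x : Fin n → Fin d → ℝ) (L ℓ α : ℝ)
    (hℓpos : 0 < ℓ) (hℓL : ℓ ≤ L / 6) (hα₁ : 3 / 5 ≤ α) (hα₂ : α ≤ 4 / 5)
    (hdiv : ∃ k : ℕ, L - ℓ = 2 * ℓ * α * k) :
    ∀ y : Fin n → Fin d → ℤ, dist (fun i k => ((y i k : ℤ) : ℝ)) x ≤ L / 2 →
      ∃ a : Fin n → Fin d → ℝ,
        (∃ m : Fin n → Fin d → ℤ, a = x + (α * ℓ) • fun i k => ((m i k : ℤ) : ℝ)) ∧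
        dist a x ≤ L / 2 ∧
        dist (fun i k => ((y i k : ℤ) : ℝ)) a ≤ ℓ / 2 := by
  obtain ⟨k₀, hk₀⟩ := hdiv
  intro y hy
  have hL2 : L / 2 = α * ℓ * k₀ + ℓ / 2 := by linarith
  have hy' : ∀ i j, |((y i j : ℤ):ℝ) - x i j| ≤ α * ℓ * k₀ + ℓ / 2 := by
    intro i j
    have h1 := dist_le_pi_dist (fun i k => ((y i k : ℤ):ℝ)) x i
    have h2 := dist_le_pi_dist (fun k => ((y i k : ℤ):ℝ)) (x i) j
    simp only [Real.dist_eq] at h1 h2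
    linarith [hL2 ▸ hy]
  have H : ∀ i j, ∃ m : ℤ, |α * ℓ * (m : ℝ)| ≤ α * ℓ * k₀ ∧
      |((y i j : ℤ):ℝ) - x i j - α * ℓ * m| ≤ ℓ / 2 := fun i j =>
    scalar_key hℓpos hα₁ hα₂ k₀ _ (hy' i j)
  choose m hm1 hm2 using H
  have hLpos : (0:ℝ) ≤ L / 2 := by linarith
  refine ⟨fun i j => x i j + α * ℓ * m i j, ⟨m, ?_⟩, ?_, ?_⟩
  · funext i j
    simp [Pi.add_apply, Pi.smul_apply, smul_eq_mul]
  · rw [dist_pi_le_iff hLpos]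
    intro i
    rw [dist_pi_le_iff hLpos]
    intro j
    rw [Real.dist_eq]
    have := hm1 i j
    rw [hL2]
    have h3 : x i j + α * ℓ * (m i j : ℝ) - x i j = α * ℓ * (m i j : ℝ) := by ring
    rw [h3]
    linarith
  · have hl2 : (0:ℝ) ≤ ℓ / 2 := by linarith
    rw [dist_pi_le_iff hl2]
    intro i
    rw [dist_pi_le_iff hl2]
    intro j
    rw [Real.dist_eq]
    have := hm2 i j
    have h3 : ((y i j : ℤ):ℝ) - (x i j + α * ℓ * (m i j : ℝ)) = ((y i j : ℤ):ℝ) - x i j - α * ℓ * m i j := by ring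
    rw [h3]
    exact this
end
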